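/- arXiv:1807.01935 — 2 statements merged into one kernel-verified Lean document; each statement's English description precedes it below -/
import Mathlib

section
/- Let M be a module over a commutative ring on which an element f acts bijectively, and consider the graded module ι₊M = ⊕_{j≥0} M·∂^j with the 'multiplication by t' operator defined by t(m·∂^j) = (f·m)·∂^j − j·m·∂^{j−1} (with the convention m·∂^{−1} = 0). Then multiplication by t is bijective on each finite-level truncation G_p = ⊕_{j=0}^{p} M·∂^j, and hence on ι₊M. -/
/-!
Multiplication by `t` preserves the filtration `G_p = ⊕_{j ≤ p} M·∂^j` and induces
multiplication by `f` on `G_p / G_{p-1} ≅ M`, which is bijective. Induction on `p` gives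
bijectivity on every `G_p`, and `ι₊M` is the directed union of the `G_p`.
-/

namespace IotaPlus

variable {M : Type*} [AddCommGroup M]

/-- Multiplication by `t` on `ι₊M`, with an additive `φ` in place of multiplication by `f`;
`v j` is the coefficient of `∂^j`. -/
def tOperator (φ : M →+ M) : (ℕ → M) →+ (ℕ → M) where
  toFun v j := φ (v j) - (j + 1) • v (j + 1)
  map_zero' := by ext; simp
  map_add' v w := by ext j; simp only [Pi.add_apply, map_add, smul_add]; abel

@[simp]
lemma tOperator_apply (φ : M →+ M) (v : ℕ → M) (j : ℕ) :
    tOperator φ v j = φ (v j) - (j + 1) • v (j + 1) := rfl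

variable (M) in
/-- The truncation `G_{n-1} = ⊕_{j<n} M·∂^j`. -/
def supportedBelow (n : ℕ) : AddSubgroup (ℕ → M) where
  carrier := {v | ∀ j, n ≤ j → v j = 0}
  zero_mem' _ _ := rfl
  add_mem' hv hw j hj := by simp [hv j hj, hw j hj]
  neg_mem' hv j hj := by simp [hv j hj]

lemma mem_supportedBelow {n : ℕ} {v : ℕ → M} :
    v ∈ supportedBelow M n ↔ ∀ j, n ≤ j → v j = 0 := Iff.rfl

lemma eq_zero_of_mem_supportedBelow_zero {v : ℕ → M} (hv : v ∈ supportedBelow M 0) : v = 0 :=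
  funext fun j => hv j (Nat.zero_le j)

lemma supportedBelow_mono : Monotone (supportedBelow M) :=
  fun _ _ hnm _ hv j hj => hv j (hnm.trans hj)

lemma single_mem_supportedBelow_succ (n : ℕ) (m : M) :
    Pi.single n m ∈ supportedBelow M (n + 1) :=
  fun _ hj => Pi.single_eq_of_ne (Nat.ne_of_gt hj) _

lemma mem_supportedBelow_of_mem_succ {n : ℕ} {v : ℕ → M}
    (hv : v ∈ supportedBelow M (n + 1)) (hn : v n = 0) : v ∈ supportedBelow M n := by
  intro j hj
  rcases hj.eq_or_lt with rfl | hlt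
  · exact hn
  · exact hv j hlt

lemma support_finite_iff_exists_mem_supportedBelow {v : ℕ → M} :
    (Function.support v).Finite ↔ ∃ n, v ∈ supportedBelow M n := by
  simp only [mem_supportedBelow, Set.finite_iff_bddAbove, bddAbove_def, Function.mem_support]
  constructor
  · rintro ⟨n, hn⟩
    exact ⟨n + 1, fun j hj => by_contra fun hvj => by have := hn j hvj; omega⟩
  · rintro ⟨n, hn⟩
    exact ⟨n, fun j hvj => by_contra fun hj => hvj (hn j (by omega))⟩

variable (φ : M →+ M)

lemma tOperator_mem_supportedBelow {n : ℕ} {v : ℕ → M} (hv : v ∈ supportedBelow M n) :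
    tOperator φ v ∈ supportedBelow M n := fun j hj => by
  simp [hv j hj, hv (j + 1) (by omega)]

lemma tOperator_apply_top {n : ℕ} {v : ℕ → M} (hv : v ∈ supportedBelow M (n + 1)) :
    tOperator φ v n = φ (v n) := by
  simp [hv (n + 1) le_rfl]

lemma eq_zero_of_tOperator_eq_zero (hφ : Function.Injective φ) {n : ℕ} {v : ℕ → M}
    (hv : v ∈ supportedBelow M n) (hTv : tOperator φ v = 0) : v = 0 := by
  induction n with
  | zero => exact eq_zero_of_mem_supportedBelow_zero hv
  | succ n ih =>
    refine ih (mem_supportedBelow_of_mem_succ hv ?_)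
    have htop := tOperator_apply_top φ hv
    rw [hTv, Pi.zero_apply] at htop
    exact hφ (by rw [← htop, map_zero])

lemma injOn_tOperator (hφ : Function.Injective φ) (n : ℕ) :
    Set.InjOn (tOperator φ) (supportedBelow M n) := fun v hv w hw hvw =>
  sub_eq_zero.mp <| eq_zero_of_tOperator_eq_zero φ hφ (sub_mem hv hw) <| by
    rw [map_sub, hvw, sub_self]

lemma surjOn_tOperator (hφ : Function.Surjective φ) (n : ℕ) :
    Set.SurjOn (tOperator φ) (supportedBelow M n) (supportedBelow M n) := by
  induction n with
  | zero =>
    intro w hw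
    exact ⟨0, zero_mem _, by rw [map_zero, eq_zero_of_mem_supportedBelow_zero hw]⟩
  | succ n ih =>
    intro w hw
    obtain ⟨m, hm⟩ := hφ (w n)
    have hsingle := single_mem_supportedBelow_succ n m
    have hrest : w - tOperator φ (Pi.single n m) ∈ supportedBelow M n := by
      refine mem_supportedBelow_of_mem_succ
        (sub_mem hw (tOperator_mem_supportedBelow φ hsingle)) ?_
      rw [Pi.sub_apply, tOperator_apply_top φ hsingle, Pi.single_eq_same, hm, sub_self]
    obtain ⟨v, hv, hTv⟩ := ih hrest
    refine ⟨v + Pi.single n m, add_mem (supportedBelow_mono n.le_succ hv) hsingle, ?_⟩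
    rw [map_add, hTv, sub_add_cancel]

lemma bijOn_tOperator (hφ : Function.Bijective φ) (n : ℕ) :
    Set.BijOn (tOperator φ) (supportedBelow M n) (supportedBelow M n) :=
  ⟨fun _ => tOperator_mem_supportedBelow φ, injOn_tOperator φ hφ.1 n,
    surjOn_tOperator φ hφ.2 n⟩

lemma bijOn_tOperator_finite_support (hφ : Function.Bijective φ) :
    Set.BijOn (tOperator φ) {v | (Function.support v).Finite}
      {v | (Function.support v).Finite} := by
  have hunion :
      {v : ℕ → M | (Function.support v).Finite} = ⋃ n, (supportedBelow M n : Set _) := by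
    ext v
    simp [support_finite_iff_exists_mem_supportedBelow]
  rw [hunion]
  exact Set.bijOn_iUnion_of_directed supportedBelow_mono.directed_le (bijOn_tOperator φ hφ)

end IotaPlus

open IotaPlus in
/-- If `f` acts bijectively on the module `M`, then the operator
`t(m·∂^j) = (f·m)·∂^j − j·m·∂^{j−1}` on `ι₊M = ⊕_{j≥0} M·∂^j` (elements encoded as
coefficient functions `ℕ → M`) is bijective on every finite-level truncation
`G_p = ⊕_{j=0}^p M·∂^j`, and on `ι₊M` itself (finitely supported functions). -/
theorem stmt8 {A : Type*} [CommRing A] {M : Type*} [AddCommGroup M] [Module A M]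
    (f : A) (hf : Function.Bijective (fun m : M => f • m)) :
    (∀ p : ℕ, Set.BijOn (fun (v : ℕ → M) => fun j => f • v j - (j + 1) • v (j + 1))
        {v : ℕ → M | ∀ j > p, v j = 0} {v : ℕ → M | ∀ j > p, v j = 0}) ∧
      Set.BijOn (fun (v : ℕ → M) => fun j => f • v j - (j + 1) • v (j + 1))
        {v : ℕ → M | (Function.support v).Finite}
        {v : ℕ → M | (Function.support v).Finite} :=
  ⟨fun p => bijOn_tOperator (DistribSMul.toAddMonoidHom M f) hf (p + 1),
    bijOn_tOperator_finite_support (DistribSMul.toAddMonoidHom M f) hf⟩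
end

section
/- Let α ∈ ℚ and for 0 ≤ i ≤ p define w'_i = ∑_{j=i}^{p} (j choose i)·Q_{j−i}(α)·v_j·f^{-(j−i+1)} in the localization ℚ(α)[f, f^{-1}]-module ⊕ℚ·v_j, where Q_m(x) = x(x+1)⋯(x+m−1) and β = 1−α. Then for 0 ≤ i ≤ p−1 the identity f·w'_i − (i+1)·w'_{i+1} = v_i + ∑_{j=i+1}^{p} (j choose i)·Q_{j−i}(−β)·v_j·f^{-(j−i)} holds. -/
/-!
Both sides are sums of multiples of the `v_j`, so it suffices to compare coefficients. For `j = i`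
only `f·w'_i` contributes, giving `v_i`. For `j > i`, writing `m = j - i - 1`, the identity
`C(j, i+1)·(i+1) = C(j, i)·(m+1)` puts both contributions over the same binomial coefficient,
and what remains is the Pochhammer recursion `Q_{m+1}(α) - (m+1)·Q_m(α) = Q_{m+1}(α - 1)`,
with `α - 1 = -β`.
-/

open Polynomial Finset

theorem ascPochhammer_eval_succ_sub_mul_eval {S : Type*} [CommRing S] (m : ℕ) (x : S) :
    (ascPochhammer S (m + 1)).eval x - (m + 1) * (ascPochhammer S m).eval x =
      (ascPochhammer S (m + 1)).eval (x - 1) := by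
  rw [ascPochhammer_succ_eval, ascPochhammer_succ_left, eval_mul, eval_comp]
  simp only [eval_X, eval_add, eval_one, sub_add_cancel]
  ring

theorem Units.mul_inv_pow_succ {M : Type*} [Monoid M] (u : Mˣ) (n : ℕ) :
    (u : M) * ((u⁻¹ : Mˣ) : M) ^ (n + 1) = ((u⁻¹ : Mˣ) : M) ^ n := by
  rw [pow_succ', Units.mul_inv_cancel_left]

theorem units_mul_choose_ascPochhammer_sub {R : Type*} [CommRing R] [Algebra ℚ R] (f : Rˣ)
    {i j : ℕ} (hij : i < j) (x : ℚ) (y : R) :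
    (f : R) * ((j.choose i : R) * algebraMap ℚ R ((ascPochhammer ℚ (j - i)).eval x) * y *
        ((f⁻¹ : Rˣ) : R) ^ (j - i + 1)) -
      ((i : R) + 1) * ((j.choose (i + 1) : R) *
        algebraMap ℚ R ((ascPochhammer ℚ (j - (i + 1))).eval x) * y *
        ((f⁻¹ : Rˣ) : R) ^ (j - (i + 1) + 1)) =
      (j.choose i : R) * algebraMap ℚ R ((ascPochhammer ℚ (j - i)).eval (x - 1)) * y *
        ((f⁻¹ : Rˣ) : R) ^ (j - i) := by
  obtain ⟨m, hm, hm'⟩ : ∃ m, j - i = m + 1 ∧ j - (i + 1) = m := ⟨j - (i + 1), by omega, rfl⟩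
  rw [hm, hm']
  have hpow := f.mul_inv_pow_succ (m + 1)
  have hchoose : (j.choose (i + 1) : R) * ((i : R) + 1) = (j.choose i : R) * ((m : R) + 1) := by
    have h := Nat.choose_succ_right_eq j i
    rw [hm] at h
    exact_mod_cast congrArg (Nat.cast : ℕ → R) h
  have hpoch := congrArg (algebraMap ℚ R) (ascPochhammer_eval_succ_sub_mul_eval m x)
  simp only [map_sub, map_mul, map_add, map_natCast, map_one] at hpoch
  linear_combination (j.choose i : R) * y * ((f⁻¹ : Rˣ) : R) ^ (m + 1) * hpoch -
    algebraMap ℚ R ((ascPochhammer ℚ m).eval x) * y * ((f⁻¹ : Rˣ) : R) ^ (m + 1) * hchoose +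
    (j.choose i : R) * algebraMap ℚ R ((ascPochhammer ℚ (m + 1)).eval x) * y * hpow

/-- Remark 3.3 of the paper: with `β = 1 − α`, `f` invertible, and
`w'_i = ∑_{j=i}^{p} C(j,i)·Q_{j−i}(α)·v_j·f^{−(j−i+1)}`, one has for `0 ≤ i ≤ p−1`:
`f·w'_i − (i+1)·w'_{i+1} = v_i + ∑_{j=i+1}^{p} C(j,i)·Q_{j−i}(−β)·v_j·f^{−(j−i)}`. -/
theorem stmt12 {R : Type*} [CommRing R] [Algebra ℚ R] (f : Rˣ) (v : ℕ → R)
    (α β : ℚ) (hβ : β = 1 - α) (p : ℕ)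
    (w' : ℕ → R)
    (hw' : ∀ i, w' i = ∑ j ∈ Finset.Icc i p,
        (j.choose i : R) * algebraMap ℚ R ((ascPochhammer ℚ (j - i)).eval α) *
          v j * ((f⁻¹ : Rˣ) : R) ^ (j - i + 1)) :
    ∀ i, i < p →
      (f : R) * w' i - ((i : R) + 1) * w' (i + 1) =
        v i + ∑ j ∈ Finset.Icc (i + 1) p,
          (j.choose i : R) * algebraMap ℚ R ((ascPochhammer ℚ (j - i)).eval (-β)) *
            v j * ((f⁻¹ : Rˣ) : R) ^ (j - i) := by
  intro i hi
  have hneg : -β = α - 1 := by rw [hβ]; ring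
  rw [hw', hw', ← insert_Icc_add_one_left_eq_Icc hi.le, sum_insert (by simp), mul_add,
    add_sub_assoc, mul_sum, mul_sum, ← sum_sub_distrib, hneg]
  congr 1
  · simp [mul_left_comm (f : R)]
  · exact sum_congr rfl fun j hj ↦
      units_mul_choose_ascPochhammer_sub f (mem_Icc.mp hj).1 α (v j)
end
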